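/- If x_a ≥ x_θ ≥ 0 and x_b ≥ 0, then Γ(x_a, x_b, x_θ) / (2·P(x_a, x_b, x_θ)) ≤ (x_a + √(2/π)) / 2. -/

import Mathlib

open MeasureTheory Real Filter

/-- Standard one-dimensional Gaussian pdf. -/
noncomputable def phi1 (x : ℝ) : ℝ := (Real.sqrt (2 * π))⁻¹ * Real.exp (-x ^ 2 / 2)

/-- `w(y, b) = e^{yb}/(e^{yb} + e^{−yb})`. -/
noncomputable def wgt (y b : ℝ) : ℝ :=
  Real.exp (y * b) / (Real.exp (y * b) + Real.exp (-(y * b)))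

/-- `P(x_a, x_b, x_θ) = ∫ w(y − x_a, x_b)·(φ(y − x_θ) + φ(y + x_θ))/2 dy`. -/
noncomputable def Pfun (xa xb xθ : ℝ) : ℝ :=
  ∫ y, wgt (y - xa) xb * ((phi1 (y - xθ) + phi1 (y + xθ)) / 2)

/-- `Γ(x_a, x_b, x_θ) = ∫ w(y − x_a, x_b)·y·(φ(y − x_θ) + φ(y + x_θ))/2 dy`. -/
noncomputable def Gfun (xa xb xθ : ℝ) : ℝ :=
  ∫ y, wgt (y - xa) xb * y * ((phi1 (y - xθ) + phi1 (y + xθ)) / 2)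

/-- `F(x_b, x_θ) = ∫ (2 w(y + x_θ, x_b) − 1)·(y + x_θ)·φ(y) dy`. -/
noncomputable def Ffun (xb xθ : ℝ) : ℝ :=
  ∫ y, (2 * wgt (y + xθ) xb - 1) * (y + xθ) * phi1 y

/-- Standard Gaussian cdf. -/
noncomputable def PhiCdf (x : ℝ) : ℝ := ∫ y in Set.Iic x, phi1 y

/-!
Substituting `y = t + x_a` gives `P = ∫ w(t, x_b) g(t) dt` and
`Γ - x_a P = ∫ w(t, x_b) t g(t) dt`, where `g` is the equal mixture of standard Gaussians
centred at `-(x_a - x_θ) ≤ 0` and `-(x_a + x_θ) ≤ 0`. As `w(-t, b) = 1 - w(t, b) ∈ [0, 1]`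
and `g(t) ≤ g(-t)` for `t > 0`, pairing `t` with `-t` yields `P ≥ ∫_{t>0} g` and
`Γ - x_a P ≤ ∫_{t>0} t g`.

It remains to bound the mean excess `E[X - s | X > s]` of a standard Gaussian by its value
`√(2/π)` at `s = 0`, for every `s ≥ 0`. With `Q` the Gaussian tail, this says that
`(s + √(2/π)) Q(s) - φ(s) ≥ 0`; that function vanishes at `0` and at `∞`, and its second
derivative `-(1 - √(2/π) s) φ(s)` makes it concave up to `√(π/2)`, after which the Mills
inequality `Q(s) ≤ φ(s)/s` makes it decreasing.
-/

open Set ProbabilityTheory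
open scoped Topology

lemma phi1_eq_gaussianPDFReal : phi1 = gaussianPDFReal 0 1 := by
  ext x
  simp [phi1, gaussianPDFReal]

lemma phi1_pos (x : ℝ) : 0 < phi1 x := by
  rw [phi1_eq_gaussianPDFReal]
  exact gaussianPDFReal_pos _ _ _ one_ne_zero

lemma phi1_abs (x : ℝ) : phi1 |x| = phi1 x := by
  simp [phi1]

lemma phi1_le_phi1_of_sq_le {a b : ℝ} (h : a ^ 2 ≤ b ^ 2) : phi1 b ≤ phi1 a := by
  unfold phi1
  gcongr

lemma phi1_add_le_phi1_neg_add {s t : ℝ} (hs : 0 ≤ s) (ht : 0 ≤ t) :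
    phi1 (t + s) ≤ phi1 (-t + s) :=
  phi1_le_phi1_of_sq_le (by nlinarith [mul_nonneg ht hs])

lemma continuous_phi1 : Continuous phi1 := by
  unfold phi1
  fun_prop

lemma integrable_phi1 : Integrable phi1 :=
  phi1_eq_gaussianPDFReal ▸ integrable_gaussianPDFReal 0 1

lemma integrable_mul_phi1 : Integrable fun x => x * phi1 x := by
  refine ((integrable_mul_exp_neg_mul_sq (b := 1 / 2) (by norm_num)).const_mul
    (√(2 * π))⁻¹).congr (ae_of_all _ fun x => ?_)
  simp only [phi1]
  ring_nf

lemma integrable_mul_phi1_add (s : ℝ) : Integrable fun t => t * phi1 (t + s) := by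
  refine ((integrable_mul_phi1.comp_add_right s).sub
    ((integrable_phi1.comp_add_right s).const_mul s)).congr (ae_of_all _ fun t => ?_)
  rw [Pi.sub_apply]
  ring_nf

lemma hasDerivAt_phi1 (x : ℝ) : HasDerivAt phi1 (-x * phi1 x) x := by
  have h : HasDerivAt (fun y : ℝ => -y ^ 2 / 2) (-x) x := by
    simpa using ((hasDerivAt_pow 2 x).neg.div_const 2).congr_deriv (by ring)
  unfold phi1
  exact (h.exp.const_mul _).congr_deriv (by ring)

lemma tendsto_phi1_atTop : Tendsto phi1 atTop (𝓝 0) := by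
  have h : Tendsto (fun x : ℝ => -x ^ 2 / 2) atTop atBot :=
    (tendsto_neg_atTop_atBot.comp (tendsto_pow_atTop two_ne_zero)).atBot_div_const two_pos
  have := (tendsto_exp_atBot.comp h).const_mul (√(2 * π))⁻¹
  rw [mul_zero] at this
  exact this

lemma integral_Ioi_mul_phi1 (s : ℝ) : ∫ x in Ioi s, x * phi1 x = phi1 s := by
  have h := integral_Ioi_of_hasDerivAt_of_tendsto' (a := s) (f := fun x => -phi1 x)
    (fun x _ => (hasDerivAt_phi1 x).neg.congr_deriv (by ring)) integrable_mul_phi1.integrableOn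
    tendsto_phi1_atTop.neg
  simpa using h

noncomputable def gaussTail (s : ℝ) : ℝ := ∫ x in Ioi s, phi1 x

lemma gaussTail_nonneg (s : ℝ) : 0 ≤ gaussTail s :=
  setIntegral_nonneg measurableSet_Ioi fun x _ => (phi1_pos x).le

lemma gaussTail_zero : gaussTail 0 = 1 / 2 := by
  have h := integral_comp_abs (f := phi1)
  simp only [phi1_abs] at h
  rw [phi1_eq_gaussianPDFReal, integral_gaussianPDFReal_eq_one 0 one_ne_zero] at h
  rw [gaussTail, phi1_eq_gaussianPDFReal]
  linarith

lemma hasDerivAt_gaussTail (s : ℝ) : HasDerivAt gaussTail (-phi1 s) s := by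
  have h : gaussTail = fun u => gaussTail 0 - ∫ x in (0 : ℝ)..u, phi1 x := by
    ext u
    rw [gaussTail, gaussTail, ← intervalIntegral.integral_Ioi_sub_Ioi'
      integrable_phi1.integrableOn integrable_phi1.integrableOn]
    ring
  rw [h]
  exact ((continuous_phi1.integral_hasStrictDerivAt 0 s).hasDerivAt).const_sub _

lemma gaussTail_le_phi1_div {s : ℝ} (hs : 0 < s) : gaussTail s ≤ phi1 s / s := by
  rw [le_div_iff₀ hs, ← integral_Ioi_mul_phi1, gaussTail, ← integral_mul_const]
  refine setIntegral_mono_on (integrable_phi1.integrableOn.mul_const s)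
    integrable_mul_phi1.integrableOn measurableSet_Ioi fun x hx => ?_
  rw [mul_comm x]
  exact mul_le_mul_of_nonneg_left (le_of_lt hx) (phi1_pos x).le

lemma tendsto_mul_gaussTail_atTop : Tendsto (fun s => s * gaussTail s) atTop (𝓝 0) := by
  refine tendsto_of_tendsto_of_tendsto_of_le_of_le' tendsto_const_nhds tendsto_phi1_atTop ?_ ?_
  · filter_upwards [eventually_ge_atTop 0] with s hs
    exact mul_nonneg hs (gaussTail_nonneg s)
  · filter_upwards [eventually_gt_atTop 0] with s hs
    exact (le_div_iff₀' hs).1 (gaussTail_le_phi1_div hs)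

lemma tendsto_gaussTail_atTop : Tendsto gaussTail atTop (𝓝 0) := by
  refine tendsto_of_tendsto_of_tendsto_of_le_of_le' tendsto_const_nhds
    tendsto_mul_gaussTail_atTop (Eventually.of_forall gaussTail_nonneg) ?_
  filter_upwards [eventually_ge_atTop 1] with s hs
  exact le_mul_of_one_le_left (gaussTail_nonneg s) hs


lemma nonneg_of_concaveOn_of_antitoneOn {f : ℝ → ℝ} {a b x : ℝ} (hab : a ≤ b)
    (hconc : ConcaveOn ℝ (Icc a b) f) (hanti : AntitoneOn f (Ici b)) (ha : 0 ≤ f a)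
    (hlim : Tendsto f atTop (𝓝 0)) (hx : a ≤ x) : 0 ≤ f x := by
  have hfar : ∀ y, b ≤ y → 0 ≤ f y := fun y hy =>
    le_of_tendsto hlim <| (eventually_ge_atTop y).mono fun z hz => hanti hy (hy.trans hz) hz
  rcases le_total b x with hbx | hxb
  · exact hfar x hbx
  · exact (le_min ha (hfar b le_rfl)).trans
      (hconc.min_le_of_mem_Icc ⟨le_rfl, hab⟩ ⟨hab, le_rfl⟩ ⟨hx, hxb⟩)

lemma sqrt_two_div_pi_pos : 0 < √(2 / π) := Real.sqrt_pos.2 (by positivity)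

lemma phi1_zero : phi1 0 = √(2 / π) / 2 := by
  have h : √(2 / π) * √(2 * π) = 2 := by
    rw [← Real.sqrt_mul (by positivity), show 2 / π * (2 * π) = 2 ^ 2 by field_simp,
      Real.sqrt_sq zero_le_two]
  have h2 : 0 < √(2 * π) := by positivity
  rw [phi1, show -(0 : ℝ) ^ 2 / 2 = 0 by norm_num, exp_zero, mul_one]
  field_simp
  linarith

noncomputable def gaussTailGap (x : ℝ) : ℝ := (x + √(2 / π)) * gaussTail x - phi1 x

lemma hasDerivAt_gaussTailGap (x : ℝ) :
    HasDerivAt gaussTailGap (gaussTail x - √(2 / π) * phi1 x) x :=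
  ((((hasDerivAt_id x).add_const _).mul (hasDerivAt_gaussTail x)).sub
    (hasDerivAt_phi1 x)).congr_deriv (by simp only [id_eq]; ring)

lemma continuous_gaussTailGap : Continuous gaussTailGap :=
  continuous_iff_continuousAt.2 fun x => (hasDerivAt_gaussTailGap x).continuousAt

lemma gaussTailGap_zero : gaussTailGap 0 = 0 := by
  rw [gaussTailGap, gaussTail_zero, phi1_zero]
  ring

lemma concaveOn_gaussTailGap : ConcaveOn ℝ (Icc 0 (√(2 / π))⁻¹) gaussTailGap := by
  set c := √(2 / π)
  have hderiv2 (x : ℝ) :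
      HasDerivAt (fun x => gaussTail x - c * phi1 x) (-(1 - c * x) * phi1 x) x :=
    ((hasDerivAt_gaussTail x).sub ((hasDerivAt_phi1 x).const_mul c)).congr_deriv (by ring)
  refine concaveOn_of_hasDerivWithinAt2_nonpos (convex_Icc _ _)
    continuous_gaussTailGap.continuousOn (fun x _ => (hasDerivAt_gaussTailGap x).hasDerivWithinAt)
    (fun x _ => (hderiv2 x).hasDerivWithinAt) fun x hx => ?_
  rw [interior_Icc] at hx
  have : c * x ≤ 1 := by
    rw [← mul_inv_cancel₀ sqrt_two_div_pi_pos.ne']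
    exact mul_le_mul_of_nonneg_left hx.2.le sqrt_two_div_pi_pos.le
  nlinarith [phi1_pos x]

lemma antitoneOn_gaussTailGap : AntitoneOn gaussTailGap (Ici (√(2 / π))⁻¹) := by
  set c := √(2 / π)
  have hc := sqrt_two_div_pi_pos
  refine antitoneOn_of_hasDerivWithinAt_nonpos (convex_Ici _) continuous_gaussTailGap.continuousOn
    (fun x _ => (hasDerivAt_gaussTailGap x).hasDerivWithinAt) fun x hx => ?_
  rw [interior_Ici] at hx
  have hx0 : 0 < x := (inv_pos.2 hc).trans hx
  have hcx : 1 < c * x := by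
    rw [← mul_inv_cancel₀ hc.ne']
    exact mul_lt_mul_of_pos_left hx hc
  have hmills : gaussTail x * x ≤ phi1 x := (le_div_iff₀ hx0).1 (gaussTail_le_phi1_div hx0)
  nlinarith [phi1_pos x, gaussTail_nonneg x]

lemma tendsto_gaussTailGap_atTop : Tendsto gaussTailGap atTop (𝓝 0) := by
  have := (tendsto_mul_gaussTail_atTop.add (tendsto_gaussTail_atTop.const_mul (√(2 / π)))).sub
    tendsto_phi1_atTop
  simp only [mul_zero, add_zero, sub_zero] at this
  exact this.congr fun x => by rw [gaussTailGap]; ring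

lemma phi1_le_add_mul_gaussTail {s : ℝ} (hs : 0 ≤ s) :
    phi1 s ≤ (s + √(2 / π)) * gaussTail s :=
  sub_nonneg.1 <| nonneg_of_concaveOn_of_antitoneOn (f := gaussTailGap)
    (inv_pos.2 sqrt_two_div_pi_pos).le concaveOn_gaussTailGap antitoneOn_gaussTailGap
    gaussTailGap_zero.ge tendsto_gaussTailGap_atTop hs

lemma setIntegral_Ioi_comp_add_right (f : ℝ → ℝ) (s : ℝ) :
    ∫ t in Ioi 0, f (t + s) = ∫ x in Ioi s, f x := by
  have h := (measurePreserving_add_right volume s).setIntegral_preimage_emb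
    (measurableEmbedding_addRight s) f (Ioi s)
  rwa [show (· + s) ⁻¹' Ioi s = Ioi 0 by ext; simp] at h

lemma setIntegral_Ioi_mul_phi1_add_le {s : ℝ} (hs : 0 ≤ s) :
    ∫ t in Ioi 0, t * phi1 (t + s) ≤ √(2 / π) * ∫ t in Ioi 0, phi1 (t + s) := by
  have hexcess : ∫ t in Ioi 0, t * phi1 (t + s) = phi1 s - s * gaussTail s := by
    have h := setIntegral_Ioi_comp_add_right (fun x => (x - s) * phi1 x) s
    simp only [add_sub_cancel_right] at h
    simp_rw [h, sub_mul]
    rw [integral_sub integrable_mul_phi1.integrableOn (integrable_phi1.const_mul s).integrableOn,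
      integral_const_mul, integral_Ioi_mul_phi1, gaussTail]
  rw [hexcess, setIntegral_Ioi_comp_add_right phi1 s, ← gaussTail]
  linarith [phi1_le_add_mul_gaussTail hs]

noncomputable def gaussMix (s₁ s₂ t : ℝ) : ℝ := (phi1 (t + s₁) + phi1 (t + s₂)) / 2

lemma gaussMix_pos (s₁ s₂ t : ℝ) : 0 < gaussMix s₁ s₂ t := by
  unfold gaussMix
  linarith [phi1_pos (t + s₁), phi1_pos (t + s₂)]

lemma integrable_gaussMix (s₁ s₂ : ℝ) : Integrable (gaussMix s₁ s₂) :=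
  ((integrable_phi1.comp_add_right s₁).add (integrable_phi1.comp_add_right s₂)).div_const 2

lemma integrable_mul_gaussMix (s₁ s₂ : ℝ) : Integrable fun t => t * gaussMix s₁ s₂ t := by
  simp_rw [gaussMix, mul_div_assoc', mul_add]
  exact ((integrable_mul_phi1_add s₁).add (integrable_mul_phi1_add s₂)).div_const 2

lemma gaussMix_le_gaussMix_neg {s₁ s₂ t : ℝ} (hs₁ : 0 ≤ s₁) (hs₂ : 0 ≤ s₂) (ht : 0 < t) :
    gaussMix s₁ s₂ t ≤ gaussMix s₁ s₂ (-t) := by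
  unfold gaussMix
  linarith [phi1_add_le_phi1_neg_add hs₁ ht.le, phi1_add_le_phi1_neg_add hs₂ ht.le]

lemma setIntegral_Ioi_mul_gaussMix_le {s₁ s₂ : ℝ} (hs₁ : 0 ≤ s₁) (hs₂ : 0 ≤ s₂) :
    ∫ t in Ioi 0, t * gaussMix s₁ s₂ t ≤ √(2 / π) * ∫ t in Ioi 0, gaussMix s₁ s₂ t := by
  simp_rw [gaussMix, mul_div_assoc', mul_add]
  rw [integral_div, integral_div,
    integral_add (integrable_mul_phi1_add s₁).integrableOn
      (integrable_mul_phi1_add s₂).integrableOn,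
    integral_add (integrable_phi1.comp_add_right s₁).integrableOn
      (integrable_phi1.comp_add_right s₂).integrableOn]
  linarith [setIntegral_Ioi_mul_phi1_add_le hs₁, setIntegral_Ioi_mul_phi1_add_le hs₂]

lemma MeasureTheory.Integrable.mul_of_mem_Icc {w g : ℝ → ℝ} (hg : Integrable g)
    (hw : Measurable w) (hw01 : ∀ t, w t ∈ Icc 0 1) : Integrable fun t => w t * g t :=
  hg.bdd_mul hw.aestronglyMeasurable (c := 1) <| ae_of_all _ fun t => by
    rw [Real.norm_eq_abs, abs_le]
    exact ⟨by linarith [(hw01 t).1], (hw01 t).2⟩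

lemma integral_eq_setIntegral_Ioi_add_comp_neg {f : ℝ → ℝ} (hf : Integrable f) :
    ∫ t, f t = ∫ t in Ioi 0, (f t + f (-t)) := by
  have h : ∫ t in Iic 0, f t = ∫ t in Ioi 0, f (-t) := by simp
  rw [← intervalIntegral.integral_Iic_add_Ioi hf.integrableOn hf.integrableOn, h, add_comm,
    integral_add hf.integrableOn hf.comp_neg.integrableOn]

lemma setIntegral_Ioi_le_integral_mul {w g : ℝ → ℝ} (hw : Measurable w)
    (hw01 : ∀ t, w t ∈ Icc 0 1) (hw_neg : ∀ t, w (-t) = 1 - w t) (hg : Integrable g)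
    (hg_le : ∀ t, 0 < t → g t ≤ g (-t)) :
    ∫ t in Ioi 0, g t ≤ ∫ t, w t * g t := by
  have hwg := hg.mul_of_mem_Icc hw hw01
  rw [integral_eq_setIntegral_Ioi_add_comp_neg hwg]
  refine setIntegral_mono_on hg.integrableOn (hwg.add hwg.comp_neg).integrableOn
    measurableSet_Ioi fun t ht => ?_
  rw [hw_neg]
  nlinarith [mul_nonneg (sub_nonneg.2 (hw01 t).2) (sub_nonneg.2 (hg_le t ht))]

lemma integral_mul_mul_le_setIntegral_Ioi {w g : ℝ → ℝ} (hw : Measurable w)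
    (hw01 : ∀ t, w t ∈ Icc 0 1) (hg : Integrable fun t => t * g t) (hg0 : ∀ t, 0 ≤ g t) :
    ∫ t, w t * t * g t ≤ ∫ t in Ioi 0, t * g t := by
  simp_rw [mul_assoc]
  rw [← integral_indicator measurableSet_Ioi]
  refine integral_mono (hg.mul_of_mem_Icc hw hw01) (hg.indicator measurableSet_Ioi) fun t => ?_
  by_cases ht : t ∈ Ioi 0
  · rw [indicator_of_mem ht]
    exact mul_le_of_le_one_left (mul_nonneg (le_of_lt ht) (hg0 t)) (hw01 t).2
  · rw [indicator_of_notMem ht]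
    exact mul_nonpos_of_nonneg_of_nonpos (hw01 t).1
      (mul_nonpos_of_nonpos_of_nonneg (not_lt.1 ht) (hg0 t))

lemma wgt_pos (y b : ℝ) : 0 < wgt y b := by
  unfold wgt
  positivity

lemma wgt_mem_Icc (y b : ℝ) : wgt y b ∈ Icc 0 1 := by
  refine ⟨(wgt_pos y b).le, ?_⟩
  rw [wgt, div_le_one (by positivity)]
  linarith [exp_pos (-(y * b))]

lemma wgt_neg (y b : ℝ) : wgt (-y) b = 1 - wgt y b := by
  unfold wgt
  rw [neg_mul, neg_neg]
  field_simp
  ring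

lemma measurable_wgt (b : ℝ) : Measurable fun y => wgt y b := by
  unfold wgt
  fun_prop

lemma Pfun_eq (xa xb xθ : ℝ) :
    Pfun xa xb xθ = ∫ t, wgt t xb * gaussMix (xa - xθ) (xa + xθ) t := by
  rw [Pfun, ← integral_add_right_eq_self _ xa]
  simp only [add_sub_cancel_right, gaussMix, add_sub_assoc, add_assoc]

lemma Gfun_eq (xa xb xθ : ℝ) :
    Gfun xa xb xθ =
      xa * Pfun xa xb xθ + ∫ t, wgt t xb * t * gaussMix (xa - xθ) (xa + xθ) t := by
  have hP := (integrable_gaussMix (xa - xθ) (xa + xθ)).mul_of_mem_Icc (measurable_wgt xb)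
    (wgt_mem_Icc · xb)
  have hG : Integrable fun t => wgt t xb * t * gaussMix (xa - xθ) (xa + xθ) t := by
    simpa only [mul_assoc] using (integrable_mul_gaussMix (xa - xθ) (xa + xθ)).mul_of_mem_Icc
      (measurable_wgt xb) (wgt_mem_Icc · xb)
  rw [Pfun_eq, ← integral_const_mul, ← integral_add (hP.const_mul xa) hG, Gfun,
    ← integral_add_right_eq_self _ xa]
  congr 1
  ext t
  simp only [add_sub_cancel_right, gaussMix, add_sub_assoc, add_assoc]
  ring

lemma Pfun_pos (xa xb xθ : ℝ) : 0 < Pfun xa xb xθ := by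
  rw [Pfun_eq, integral_pos_iff_support_of_nonneg
    (fun t => (mul_pos (wgt_pos t xb) (gaussMix_pos _ _ t)).le)
    ((integrable_gaussMix _ _).mul_of_mem_Icc (measurable_wgt xb) (wgt_mem_Icc · xb))]
  rw [Function.support_eq_univ fun t => (mul_pos (wgt_pos t xb) (gaussMix_pos _ _ t)).ne']
  simp

theorem stmt17_general (xa xb xθ : ℝ) (hθ : 0 ≤ xθ) (ha : xθ ≤ xa) :
    Gfun xa xb xθ / (2 * Pfun xa xb xθ) ≤ (xa + Real.sqrt (2 / π)) / 2 := by
  have hs₁ : 0 ≤ xa - xθ := sub_nonneg.2 ha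
  have hs₂ : 0 ≤ xa + xθ := by linarith
  have hP_ge : ∫ t in Ioi 0, gaussMix (xa - xθ) (xa + xθ) t ≤ Pfun xa xb xθ :=
    (Pfun_eq xa xb xθ).symm ▸ setIntegral_Ioi_le_integral_mul (measurable_wgt xb)
      (wgt_mem_Icc · xb) (wgt_neg · xb) (integrable_gaussMix _ _)
      fun _ ht => gaussMix_le_gaussMix_neg hs₁ hs₂ ht
  have hG_le : Gfun xa xb xθ - xa * Pfun xa xb xθ
      ≤ ∫ t in Ioi 0, t * gaussMix (xa - xθ) (xa + xθ) t := by
    rw [Gfun_eq, add_sub_cancel_left]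
    exact integral_mul_mul_le_setIntegral_Ioi (measurable_wgt xb) (wgt_mem_Icc · xb)
      (integrable_mul_gaussMix _ _) fun t => (gaussMix_pos _ _ t).le
  have hexcess := setIntegral_Ioi_mul_gaussMix_le hs₁ hs₂
  rw [div_le_div_iff₀ (mul_pos two_pos (Pfun_pos xa xb xθ)) two_pos]
  linarith [mul_le_mul_of_nonneg_left hP_ge sqrt_two_div_pi_pos.le]

/-- If `x_a ≥ x_θ ≥ 0` and `x_b ≥ 0` then `Γ/(2P) ≤ (x_a + √(2/π))/2`. -/
theorem stmt17 (xa xb xθ : ℝ) (hθ : 0 ≤ xθ) (ha : xθ ≤ xa) (hb : 0 ≤ xb) :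
    Gfun xa xb xθ / (2 * Pfun xa xb xθ) ≤ (xa + Real.sqrt (2 / π)) / 2 :=
  stmt17_general xa xb xθ hθ ha
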